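/- arXiv:1212.5732 — 5 statements merged into one kernel-verified Lean document; each statement's English description precedes it below -/
import Mathlib

section
/- Let A : [a,b] → M₂(ℂ) be continuous with A(t) Hermitian and A(t) having distinct eigenvalues for every t ∈ [a,b]. Then there exists a continuous U : [a,b] → M₂(ℂ) such that U(t) is unitary and U(t)* A(t) U(t) is diagonal for all t ∈ [a,b]. -/
/-!
The eigenvalues `λ₊(t) > λ₋(t)` are the roots of `x² - (tr A) x + det A`, so they depend
continuously on `t`, and so does the spectral projection `P(t) = (A(t) - λ₋(t)) / (λ₊(t) - λ₋(t))`
onto the `λ₊`-eigenline. Over an interval this line has a continuous nonvanishing section: on a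
grid finer than a modulus of uniform continuity of `P`, the vector `P(t) v(tᵢ)` cannot vanish for
`t ∈ [tᵢ, tᵢ₊₁]`, because `‖P(t) - P(tᵢ)‖ < 1`. Normalising gives a continuous unit eigenvector
`u(t)`; the unitary with columns `u` and `(-ū₁, ū₀)` then diagonalises the Hermitian `A(t)`.
-/

open Matrix Set

def HasDistinctEigenvalues (A : Matrix (Fin 2) (Fin 2) ℂ) : Prop :=
  ∃ mu1 mu2 : ℝ, mu1 ≠ mu2 ∧
    ∀ x : ℂ, det (x • (1 : Matrix (Fin 2) (Fin 2) ℂ) - A) = 0 ↔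
      x = (mu1 : ℂ) ∨ x = (mu2 : ℂ)

section RangeSection

variable {𝕜 E : Type*} [NontriviallyNormedField 𝕜] [NormedAddCommGroup E] [NormedSpace 𝕜 E]

def IsRangeSection (P : ℝ → E →L[𝕜] E) (s : Set ℝ) (v : ℝ → E) : Prop :=
  ContinuousOn v s ∧ ∀ t ∈ s, v t ≠ 0 ∧ P t (v t) = v t

lemma ContinuousLinearMap.apply_ne_zero_of_norm_sub_lt_one {P Q : E →L[𝕜] E}
    (hPQ : ‖Q - P‖ < 1) {w : E} (hw : w ≠ 0) (hPw : P w = w) : Q w ≠ 0 := by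
  intro hQw
  have hw' : (Q - P) w = -w := by simp [hQw, hPw]
  have : ‖w‖ < ‖w‖ := calc
    ‖w‖ = ‖(Q - P) w‖ := by rw [hw', norm_neg]
    _ ≤ ‖Q - P‖ * ‖w‖ := (Q - P).le_opNorm w
    _ < 1 * ‖w‖ := by gcongr
    _ = ‖w‖ := one_mul _
  exact lt_irrefl _ this

lemma IsRangeSection.extend {P : ℝ → E →L[𝕜] E} {a c d : ℝ} {v : ℝ → E}
    (hv : IsRangeSection P (Icc a c) v) (hac : a ≤ c) (hcd : c ≤ d)
    (hP : ContinuousOn P (Icc c d)) (hidem : ∀ t ∈ Icc c d, IsIdempotentElem (P t))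
    (hnear : ∀ t ∈ Icc c d, ‖P t - P c‖ < 1) :
    ∃ w : ℝ → E, IsRangeSection P (Icc a d) w := by
  obtain ⟨hv_cont, hv⟩ := hv
  obtain ⟨hvc_ne, hvc_fix⟩ := hv c ⟨hac, le_rfl⟩
  have hext_cont : ContinuousOn (fun t => P t (v c)) (Icc c d) :=
    hP.clm_apply continuousOn_const
  refine ⟨fun t => if t ≤ c then v t else P t (v c), ?_, fun t ht => ?_⟩
  · rw [← Icc_union_Icc_eq_Icc hac hcd]
    refine ContinuousOn.union_of_isClosed ?_ ?_ isClosed_Icc isClosed_Icc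
    · exact hv_cont.congr fun t ht => if_pos ht.2
    · refine hext_cont.congr fun t ht => ?_
      rcases ht.1.eq_or_lt with rfl | hct
      · simp [hvc_fix]
      · exact if_neg hct.not_ge
  · by_cases htc : t ≤ c
    · simpa only [if_pos htc] using hv t ⟨ht.1, htc⟩
    · have ht' : t ∈ Icc c d := ⟨le_of_not_ge htc, ht.2⟩
      simp only [if_neg htc]
      exact ⟨ContinuousLinearMap.apply_ne_zero_of_norm_sub_lt_one (hnear t ht') hvc_ne hvc_fix,
        congrArg (fun Q : E →L[𝕜] E => Q (v c)) (hidem t ht')⟩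

theorem exists_isRangeSection {P : ℝ → E →L[𝕜] E} {a b : ℝ} (hab : a ≤ b)
    (hP : ContinuousOn P (Icc a b)) (hidem : ∀ t ∈ Icc a b, IsIdempotentElem (P t))
    (hPa : P a ≠ 0) :
    ∃ v : ℝ → E, IsRangeSection P (Icc a b) v := by
  obtain ⟨δ, hδ, hPδ⟩ := Metric.uniformContinuousOn_iff_le.mp
    (isCompact_Icc.uniformContinuousOn_of_continuous hP) (1 / 2) (by norm_num)
  have hgrid : ∀ n : ℕ, ∀ c ∈ Icc a b, c ≤ a + n * δ → ∃ v, IsRangeSection P (Icc a c) v := by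
    intro n
    induction n with
    | zero =>
      intro c hc hca
      obtain rfl : c = a := le_antisymm (by simpa using hca) hc.1
      obtain ⟨x, hx⟩ : ∃ x, P c x ≠ 0 := by
        by_contra! h
        exact hPa (ContinuousLinearMap.ext h)
      refine ⟨fun _ => P c x, continuousOn_const, fun t ht => ?_⟩
      obtain rfl : t = c := le_antisymm ht.2 ht.1
      exact ⟨hx, congrArg (fun Q : E →L[𝕜] E => Q x) (hidem t hc)⟩
    | succ n ih =>
      intro c hc hcn
      set c' := max a (c - δ)
      have hc' : c' ∈ Icc a c := ⟨le_max_left _ _, max_le hc.1 (by linarith)⟩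
      have hsub : Icc c' c ⊆ Icc a b := Icc_subset_Icc hc'.1 hc.2
      obtain ⟨v, hv⟩ := ih c' ⟨hc'.1, hc'.2.trans hc.2⟩
        (max_le (le_add_of_nonneg_right (by positivity)) (by push_cast at hcn; linarith))
      refine hv.extend hc'.1 hc'.2 (hP.mono hsub) (fun t ht => hidem t (hsub ht)) fun t ht => ?_
      rw [← dist_eq_norm]
      refine (hPδ t (hsub ht) c' (hsub ⟨le_rfl, hc'.2⟩) ?_).trans_lt (by norm_num)
      rw [Real.dist_eq, abs_of_nonneg (by linarith [ht.1])]
      linarith [ht.2, le_max_right a (c - δ)]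
  obtain ⟨n, hn⟩ := exists_nat_gt ((b - a) / δ)
  exact hgrid n b ⟨hab, le_rfl⟩ (by rw [div_lt_iff₀ hδ] at hn; linarith)

end RangeSection

namespace Matrix

section CommRing

variable {R : Type*} [CommRing R]

lemma mul_self_fin_two (M : Matrix (Fin 2) (Fin 2) R) : M * M = M.trace • M - M.det • 1 := by
  ext i j
  fin_cases i <;> fin_cases j <;>
    simp [mul_apply, trace_fin_two, det_fin_two] <;> ring

lemma det_smul_one_sub_fin_two (M : Matrix (Fin 2) (Fin 2) R) (x : R) :
    det (x • (1 : Matrix (Fin 2) (Fin 2) R) - M) = x ^ 2 - M.trace * x + M.det := by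
  simp [det_fin_two, trace_fin_two]
  ring

lemma sub_smul_one_mul_self {M : Matrix (Fin 2) (Fin 2) R} {μ ν : R}
    (htr : M.trace = μ + ν) (hdet : M.det = μ * ν) :
    (M - ν • 1) * (M - ν • 1) = (μ - ν) • (M - ν • 1) := by
  simp only [sub_mul, mul_sub, smul_mul_assoc, mul_smul_comm, mul_one, one_mul,
    mul_self_fin_two, htr, hdet]
  module

end CommRing

section Field

variable {K : Type*} [Field K] {M : Matrix (Fin 2) (Fin 2) K} {μ ν : K}

/-- The projection onto the `μ`-eigenline along the `ν`-eigenline. -/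
def eigenprojection (M : Matrix (Fin 2) (Fin 2) K) (μ ν : K) : Matrix (Fin 2) (Fin 2) K :=
  (μ - ν)⁻¹ • (M - ν • 1)

lemma isIdempotentElem_eigenprojection (htr : M.trace = μ + ν) (hdet : M.det = μ * ν)
    (hne : μ ≠ ν) : IsIdempotentElem (eigenprojection M μ ν) := by
  rw [IsIdempotentElem, eigenprojection, smul_mul_smul, sub_smul_one_mul_self htr hdet, smul_smul,
    mul_assoc, inv_mul_cancel₀ (sub_ne_zero.mpr hne), mul_one]

lemma mul_eigenprojection (htr : M.trace = μ + ν) (hdet : M.det = μ * ν) :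
    M * eigenprojection M μ ν = μ • eigenprojection M μ ν := by
  have h : M * (M - ν • 1) = μ • (M - ν • 1) := calc
    M * (M - ν • 1) = (M - ν • 1) * (M - ν • 1) + ν • (M - ν • 1) := by
      simp only [sub_mul, smul_mul_assoc, one_mul]; module
    _ = μ • (M - ν • 1) := by rw [sub_smul_one_mul_self htr hdet]; module
  rw [eigenprojection, mul_smul_comm, h, smul_comm]

lemma trace_eigenprojection (htr : M.trace = μ + ν) (hne : μ ≠ ν) :
    (eigenprojection M μ ν).trace = 1 := by
  rw [eigenprojection, trace_smul, trace_sub, trace_smul, trace_one, htr, Fintype.card_fin,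
    smul_eq_mul, smul_eq_mul, Nat.cast_ofNat, show μ + ν - ν * 2 = μ - ν by ring,
    inv_mul_cancel₀ (sub_ne_zero.mpr hne)]

end Field

/-- The larger root of `x ^ 2 - (trace M) x + det M`; meaningless unless the trace and the
determinant are real and the discriminant is nonnegative. -/
noncomputable def maxEigenvalue (M : Matrix (Fin 2) (Fin 2) ℂ) : ℝ :=
  (M.trace.re + √(M.trace.re ^ 2 - 4 * M.det.re)) / 2

/-- The smaller root, under the same proviso as `maxEigenvalue`. -/
noncomputable def minEigenvalue (M : Matrix (Fin 2) (Fin 2) ℂ) : ℝ :=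
  (M.trace.re - √(M.trace.re ^ 2 - 4 * M.det.re)) / 2

lemma continuous_maxEigenvalue : Continuous maxEigenvalue := by
  unfold maxEigenvalue; fun_prop

lemma continuous_minEigenvalue : Continuous minEigenvalue := by
  unfold minEigenvalue; fun_prop

def unitaryOfColumn (u : Fin 2 → ℂ) : Matrix (Fin 2) (Fin 2) ℂ :=
  !![u 0, -star (u 1); u 1, star (u 0)]

lemma continuous_unitaryOfColumn : Continuous unitaryOfColumn := by
  refine continuous_matrix fun i j => ?_
  fin_cases i <;> fin_cases j <;> simp [unitaryOfColumn] <;> fun_prop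

lemma transpose_unitaryOfColumn_zero (u : Fin 2 → ℂ) : (unitaryOfColumn u)ᵀ 0 = u := by
  ext i; fin_cases i <;> rfl

lemma conjTranspose_unitaryOfColumn_mul_self {u : Fin 2 → ℂ} (hu : star u ⬝ᵥ u = 1) :
    (unitaryOfColumn u)ᴴ * unitaryOfColumn u = 1 := by
  simp only [dotProduct, Fin.sum_univ_two, Pi.star_apply, Complex.star_def] at hu
  ext i j
  fin_cases i <;> fin_cases j <;>
    simp [unitaryOfColumn, mul_apply, Fin.sum_univ_two]
  · linear_combination hu
  · ring
  · ring
  · linear_combination hu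

lemma IsHermitian.isDiag_conjTranspose_mul_mul_fin_two {R : Type*} [CommRing R] [StarRing R]
    {M U : Matrix (Fin 2) (Fin 2) R} {μ : R} (hM : M.IsHermitian) (hU : Uᴴ * U = 1)
    (hMU : M *ᵥ Uᵀ 0 = μ • Uᵀ 0) : (Uᴴ * M * U).IsDiag := by
  have hcol : ∀ k, (M * U) k 0 = μ * U k 0 := fun k => by
    simpa [mulVec, dotProduct, mul_apply] using congrFun hMU k
  have h10 : (Uᴴ * M * U) 1 0 = 0 := calc
    (Uᴴ * M * U) 1 0 = ∑ k, star (U k 1) * (μ * U k 0) := by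
      simp only [Matrix.mul_assoc, mul_apply (M := Uᴴ), hcol, conjTranspose_apply]
    _ = μ * (Uᴴ * U) 1 0 := by
      simp only [mul_apply, conjTranspose_apply, Finset.mul_sum]
      exact Finset.sum_congr rfl fun k _ => by ring
    _ = 0 := by simp [hU]
  intro i j hij
  fin_cases i <;> fin_cases j
  · exact absurd rfl hij
  · simpa [h10] using ((isHermitian_conjTranspose_mul_mul U hM).apply 0 1).symm
  · exact h10
  · exact absurd rfl hij

end Matrix

lemma HasDistinctEigenvalues.exists_trace_det {M : Matrix (Fin 2) (Fin 2) ℂ}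
    (h : HasDistinctEigenvalues M) : ∃ μ ν : ℝ, μ ≠ ν ∧ M.trace = μ + ν ∧ M.det = μ * ν := by
  obtain ⟨μ, ν, hne, hroots⟩ := h
  have hμ := (hroots μ).mpr (Or.inl rfl)
  have hν := (hroots ν).mpr (Or.inr rfl)
  rw [det_smul_one_sub_fin_two] at hμ hν
  have hne' : (μ : ℂ) - ν ≠ 0 := sub_ne_zero.mpr (Complex.ofReal_injective.ne hne)
  have htr : M.trace = μ + ν :=
    (mul_left_cancel₀ hne' (by linear_combination hμ - hν)).symm
  exact ⟨μ, ν, hne, htr, by linear_combination hμ + (μ : ℂ) * htr⟩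

lemma HasDistinctEigenvalues.trace_det_eq {M : Matrix (Fin 2) (Fin 2) ℂ}
    (h : HasDistinctEigenvalues M) :
    M.trace = maxEigenvalue M + minEigenvalue M ∧ M.det = maxEigenvalue M * minEigenvalue M ∧
      minEigenvalue M < maxEigenvalue M := by
  obtain ⟨μ, ν, hne, htr, hdet⟩ := h.exists_trace_det
  have hdisc : √(M.trace.re ^ 2 - 4 * M.det.re) = |μ - ν| := by
    rw [htr, hdet, ← Real.sqrt_sq_eq_abs]
    congr 1
    simp only [← Complex.ofReal_add, ← Complex.ofReal_mul, Complex.ofReal_re]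
    ring
  simp only [maxEigenvalue, minEigenvalue, hdisc]
  simp only [htr, hdet, ← Complex.ofReal_add, ← Complex.ofReal_mul, Complex.ofReal_re]
  refine ⟨by congr 1; ring, ?_, by linarith [abs_pos.mpr (sub_ne_zero.mpr hne)]⟩
  congr 1
  linear_combination (1 / 4 : ℝ) * sq_abs (μ - ν)

theorem exists_continuousOn_unit_eigenvector {a b : ℝ} (hab : a ≤ b)
    {A : ℝ → Matrix (Fin 2) (Fin 2) ℂ} (hcont : ContinuousOn A (Icc a b))
    (hdist : ∀ t ∈ Icc a b, HasDistinctEigenvalues (A t)) :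
    ∃ u : ℝ → Fin 2 → ℂ, ContinuousOn u (Icc a b) ∧
      ∀ t ∈ Icc a b, star (u t) ⬝ᵥ u t = 1 ∧ A t *ᵥ u t = (maxEigenvalue (A t) : ℂ) • u t := by
  set E : ℝ → Matrix (Fin 2) (Fin 2) ℂ :=
    fun t => eigenprojection (A t) (maxEigenvalue (A t)) (minEigenvalue (A t))
  have heig := fun t ht => (hdist t ht).trace_det_eq
  have hne : ∀ t ∈ Icc a b, (maxEigenvalue (A t) : ℂ) ≠ minEigenvalue (A t) :=
    fun t ht => Complex.ofReal_injective.ne (heig t ht).2.2.ne'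
  have hE_cont : ContinuousOn E (Icc a b) := by
    have hmax := Complex.continuous_ofReal.comp_continuousOn
      (continuous_maxEigenvalue.comp_continuousOn hcont)
    have hmin := Complex.continuous_ofReal.comp_continuousOn
      (continuous_minEigenvalue.comp_continuousOn hcont)
    exact ((hmax.sub hmin).inv₀ fun t ht => sub_ne_zero.mpr (hne t ht)).smul
      (hcont.sub (hmin.smul continuousOn_const))
  have hT_cont : Continuous (toEuclideanCLM (n := Fin 2) (𝕜 := ℂ)) :=
    LinearMap.continuous_of_finiteDimensional
      (toEuclideanCLM (n := Fin 2) (𝕜 := ℂ)).toAlgEquiv.toLinearEquiv.toLinearMap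
  have ha : a ∈ Icc a b := ⟨le_rfl, hab⟩
  have hE_ne : E a ≠ 0 := fun h => one_ne_zero <| by
    rw [← trace_eigenprojection (heig a ha).1 (hne a ha), ← trace_zero (Fin 2) ℂ]
    exact congrArg trace h
  obtain ⟨v, hv_cont, hv⟩ := exists_isRangeSection hab (hT_cont.comp_continuousOn hE_cont)
    (fun t ht => (isIdempotentElem_eigenprojection (heig t ht).1 (heig t ht).2.1 (hne t ht)).map _)
    ((map_ne_zero_iff _ toEuclideanCLM.injective).mpr hE_ne)
  refine ⟨fun t => (((‖v t‖ : ℂ)⁻¹) • v t).ofLp, ?_, fun t ht => ⟨?_, ?_⟩⟩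
  · exact (PiLp.continuous_ofLp 2 _).comp_continuousOn
      (((Complex.continuous_ofReal.comp_continuousOn hv_cont.norm).inv₀
        fun t ht => Complex.ofReal_ne_zero.mpr (norm_ne_zero_iff.mpr (hv t ht).1)).smul hv_cont)
  · rw [dotProduct_comm, ← EuclideanSpace.inner_eq_star_dotProduct, inner_self_eq_norm_sq_to_K]
    simp [norm_smul, (hv t ht).1]
  · have hfix : E t *ᵥ (v t).ofLp = (v t).ofLp := congrArg WithLp.ofLp (hv t ht).2
    dsimp only
    rw [WithLp.ofLp_smul, mulVec_smul, ← hfix, mulVec_mulVec,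
      mul_eigenprojection (heig t ht).1 (heig t ht).2.1, smul_mulVec, smul_comm]

theorem continuous_diagonalization_2x2
    (a b : ℝ) (hab : a ≤ b) (A : ℝ → Matrix (Fin 2) (Fin 2) ℂ)
    (hcont : ContinuousOn A (Icc a b))
    (hherm : ∀ t ∈ Icc a b, (A t).IsHermitian)
    (hdist : ∀ t ∈ Icc a b, HasDistinctEigenvalues (A t)) :
    ∃ U : ℝ → Matrix (Fin 2) (Fin 2) ℂ,
      ContinuousOn U (Icc a b) ∧
      ∀ t ∈ Icc a b, (U t)ᴴ * U t = 1 ∧ ((U t)ᴴ * A t * U t).IsDiag := by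
  obtain ⟨u, hu_cont, hu⟩ := exists_continuousOn_unit_eigenvector hab hcont hdist
  refine ⟨fun t => unitaryOfColumn (u t), continuous_unitaryOfColumn.comp_continuousOn hu_cont,
    fun t ht => ?_⟩
  obtain ⟨hu_unit, hu_eigen⟩ := hu t ht
  rw [← transpose_unitaryOfColumn_zero (u t)] at hu_eigen
  have hU := conjTranspose_unitaryOfColumn_mul_self hu_unit
  exact ⟨hU, (hherm t ht).isDiag_conjTranspose_mul_mul_fin_two hU hu_eigen⟩
end

section
/- Let A : [a,b] → M₂(ℝ) be continuous with A(t) symmetric and A(t) having distinct eigenvalues for every t ∈ [a,b]. Then there exists a continuous O : [a,b] → M₂(ℝ) such that O(t) is orthogonal and O(t)ᵀ A(t) O(t) is diagonal for all t ∈ [a,b]. -/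
/-!
For a symmetric `2 × 2` matrix `A`, the complex number `w = (A₀₀ - A₁₁)/2 + i A₀₁` (its
`deviator`) vanishes exactly when `A` is scalar, i.e. has a double eigenvalue. Conjugating `A` by
the rotation through `θ` turns its off-diagonal entry into `Im (e^{-2iθ} w)`, so `A` is
diagonalised by the rotation through half an argument of `w`. Along the interval `w` is
continuous and nonvanishing, so lifting it through the covering map `exp : ℂ → ℂ \ {0}` gives a
continuous argument, hence a continuous rotation.
-/

open Matrix Set

def HasDistinctEigenvaluesR (A : Matrix (Fin 2) (Fin 2) ℝ) : Prop :=
  ∃ mu1 mu2 : ℝ, mu1 ≠ mu2 ∧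
    ∀ x : ℝ, det (x • (1 : Matrix (Fin 2) (Fin 2) ℝ) - A) = 0 ↔
      x = mu1 ∨ x = mu2

theorem Complex.exists_continuous_arg_of_ne_zero {X : Type*} [TopologicalSpace X]
    [SimplyConnectedSpace X] [LocallyPathConnectedSpace X] {f : X → ℂ} (hf : Continuous f)
    (hf₀ : ∀ x, f x ≠ 0) :
    ∃ φ : X → ℝ, Continuous φ ∧ ∀ x, f x = ‖f x‖ * Complex.exp (φ x * Complex.I) := by
  obtain ⟨x₀⟩ : Nonempty X := inferInstance
  obtain ⟨F, ⟨-, hF⟩, -⟩ := Complex.isCoveringMapOn_exp.existsUnique_continuousMap_lifts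
    ⟨f, hf⟩ (Complex.exp_log (hf₀ x₀)) hf₀
  refine ⟨fun x => (F x).im, Complex.continuous_im.comp F.continuous, fun x => ?_⟩
  have hx : Complex.exp (F x) = f x := congrFun hF x
  rw [← hx, Complex.norm_exp, Complex.ofReal_exp, ← Complex.exp_add, Complex.re_add_im]

namespace Matrix

noncomputable def rotation (θ : ℝ) : Matrix (Fin 2) (Fin 2) ℝ :=
  !![Real.cos θ, -Real.sin θ; Real.sin θ, Real.cos θ]

theorem continuous_rotation : Continuous rotation := by
  unfold rotation
  fun_prop

theorem rotation_transpose_mul_self (θ : ℝ) : (rotation θ)ᵀ * rotation θ = 1 := by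
  ext i j
  fin_cases i <;> fin_cases j <;>
    simp [rotation, Matrix.mul_apply, Fin.sum_univ_two, mul_comm (Real.sin θ), ← sq]

theorem rotation_transpose_mul_mul_rotation_apply_zero_one {A : Matrix (Fin 2) (Fin 2) ℝ}
    (hA : A.IsSymm) (θ : ℝ) :
    ((rotation θ)ᵀ * A * rotation θ) 0 1 =
      A 0 1 * Real.cos (2 * θ) - (A 0 0 - A 1 1) / 2 * Real.sin (2 * θ) := by
  have h10 : A 1 0 = A 0 1 := hA.apply 0 1
  simp only [rotation, mul_apply, transpose_apply, of_apply, cons_val', cons_val_zero,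
    cons_val_fin_one, Fin.sum_univ_two, cons_val_one, h10, mul_neg, Real.cos_two_mul,
    Real.sin_two_mul]
  linear_combination (-A 0 1) * Real.sin_sq_add_cos_sq θ

theorem IsSymm.isDiag_of_apply_zero_one {α : Type*} [Zero α] {M : Matrix (Fin 2) (Fin 2) α}
    (hM : M.IsSymm) (h : M 0 1 = 0) : M.IsDiag := by
  intro i j hij
  fin_cases i <;> fin_cases j
  · exact absurd rfl hij
  · exact h
  · exact (hM.apply 0 1).trans h
  · exact absurd rfl hij

theorem IsSymm.transpose_mul_mul {n α : Type*} [Fintype n] [CommSemiring α]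
    {A : Matrix n n α} (hA : A.IsSymm) (B : Matrix n n α) : (Bᵀ * A * B).IsSymm := by
  simp only [IsSymm, transpose_mul, transpose_transpose, hA.eq, Matrix.mul_assoc]

noncomputable def deviator (A : Matrix (Fin 2) (Fin 2) ℝ) : ℂ := ⟨(A 0 0 - A 1 1) / 2, A 0 1⟩

theorem continuous_deviator : Continuous deviator :=
  Complex.equivRealProdCLM.symm.continuous.comp
    (show Continuous fun A : Matrix (Fin 2) (Fin 2) ℝ => ((A 0 0 - A 1 1) / 2, A 0 1) by fun_prop)

theorem deviator_ne_zero {A : Matrix (Fin 2) (Fin 2) ℝ} (hA : A.IsSymm)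
    (hA₂ : HasDistinctEigenvaluesR A) : A.deviator ≠ 0 := by
  intro h
  have h01 : A 0 1 = 0 := congrArg Complex.im h
  have h11 : A 1 1 = A 0 0 := by
    have := congrArg Complex.re h
    simp only [deviator, Complex.zero_re] at this
    linarith
  have h10 : A 1 0 = 0 := (hA.apply 0 1).trans h01
  obtain ⟨μ₁, μ₂, hμ, hroots⟩ := hA₂
  have hroot : ∀ x, det (x • (1 : Matrix (Fin 2) (Fin 2) ℝ) - A) = 0 → x = A 0 0 := by
    intro x hx
    rw [det_fin_two] at hx
    simp only [sub_apply, smul_apply, one_apply_eq, smul_eq_mul, mul_one, h11, ne_eq,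
      zero_ne_one, not_false_eq_true, one_apply_ne, mul_zero, h01, sub_self, one_ne_zero, h10,
      sub_zero, mul_eq_zero, or_self] at hx
    linarith
  exact hμ ((hroot μ₁ ((hroots μ₁).2 (.inl rfl))).trans (hroot μ₂ ((hroots μ₂).2 (.inr rfl))).symm)

theorem exists_continuous_rotation_isDiag {X : Type*} [TopologicalSpace X]
    [SimplyConnectedSpace X] [LocallyPathConnectedSpace X] {A : X → Matrix (Fin 2) (Fin 2) ℝ}
    (hA : Continuous A) (hsymm : ∀ x, (A x).IsSymm) (hA₀ : ∀ x, (A x).deviator ≠ 0) :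
    ∃ θ : X → ℝ, Continuous θ ∧ ∀ x, ((rotation (θ x))ᵀ * A x * rotation (θ x)).IsDiag := by
  obtain ⟨φ, hφ, hpolar⟩ :=
    Complex.exists_continuous_arg_of_ne_zero (continuous_deviator.comp hA) hA₀
  refine ⟨fun x => φ x / 2, hφ.div_const 2, fun x => ?_⟩
  refine (hsymm x).transpose_mul_mul _ |>.isDiag_of_apply_zero_one ?_
  have hre : (A x).deviator.re = ‖(A x).deviator‖ * Real.cos (φ x) := by
    simpa using congrArg Complex.re (hpolar x)
  have him : (A x).deviator.im = ‖(A x).deviator‖ * Real.sin (φ x) := by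
    simpa using congrArg Complex.im (hpolar x)
  rw [rotation_transpose_mul_mul_rotation_apply_zero_one (hsymm x), mul_div_cancel₀ _ two_ne_zero,
    show A x 0 1 = (A x).deviator.im from rfl,
    show (A x 0 0 - A x 1 1) / 2 = (A x).deviator.re from rfl, hre, him]
  ring

end Matrix

theorem continuous_diagonalization_2x2_real
    (a b : ℝ) (hab : a ≤ b) (A : ℝ → Matrix (Fin 2) (Fin 2) ℝ)
    (hcont : ContinuousOn A (Icc a b))
    (hsymm : ∀ t ∈ Icc a b, (A t).IsSymm)
    (hdist : ∀ t ∈ Icc a b, HasDistinctEigenvaluesR (A t)) :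
    ∃ O : ℝ → Matrix (Fin 2) (Fin 2) ℝ,
      ContinuousOn O (Icc a b) ∧
      ∀ t ∈ Icc a b, (O t)ᵀ * O t = 1 ∧ ((O t)ᵀ * A t * O t).IsDiag := by
  let p : ℝ → ℝ := fun t => projIcc a b hab t
  have hp : ∀ t, p t ∈ Icc a b := fun t => (projIcc a b hab t).2
  obtain ⟨θ, hθ, hdiag⟩ := Matrix.exists_continuous_rotation_isDiag
    (hcont.comp_continuous (continuous_subtype_val.comp continuous_projIcc) hp)
    (fun t => hsymm _ (hp t)) (fun t => Matrix.deviator_ne_zero (hsymm _ (hp t)) (hdist _ (hp t)))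
  refine ⟨fun t => Matrix.rotation (θ t), (Matrix.continuous_rotation.comp hθ).continuousOn,
    fun t ht => ⟨Matrix.rotation_transpose_mul_self _, ?_⟩⟩
  simpa [p, projIcc_of_mem hab ht] using hdiag t
end

section
/- Let v : [a,b] → ℝⁿ be continuously differentiable and suppose v(t) = 0 for only finitely many t ∈ [a,b]. Then there exists a continuously differentiable μ : [a,b] → ℝ such that |μ(t)| = ‖v(t)‖₂ for all t ∈ [a,b]. -/
/-!
Multiply `‖v‖` by a sign that flips at every zero of `v`. Away from the zeros this is `±‖v‖`,
with derivative `±⟪v, v'⟫ / ‖v‖`. At a zero `t₀` the flip turns the one-sided slopes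
`±‖v t‖ / |t - t₀|` into the single expression `±‖(t - t₀)⁻¹ • v t‖ → ±‖v' t₀‖`, and the derivative
is continuous at `t₀` because `⟪x, y⟫ / ‖x‖ → ‖y₀‖` whenever `x, y → y₀`; here `x` is the
difference quotient of `v` at `t₀` and `y = v'`.
-/

open Set Filter Topology RealInnerProductSpace

theorem Set.Finite.eventually_notMem_nhdsNE {X : Type*} [TopologicalSpace X] [T1Space X]
    {s : Set X} (hs : s.Finite) (x : X) : ∀ᶠ y in 𝓝[≠] x, y ∉ s := by
  have hrest : (s \ {x})ᶜ ∈ 𝓝 x := hs.sdiff.isClosed.isOpen_compl.mem_nhds (by simp)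
  filter_upwards [nhdsWithin_le_nhds hrest, self_mem_nhdsWithin] with y hy hyx
  simp_all

noncomputable def crossingSign (F : Finset ℝ) (t : ℝ) : ℝ :=
  ∏ z ∈ F, if t < z then -1 else 1

theorem abs_crossingSign (F : Finset ℝ) (t : ℝ) : |crossingSign F t| = 1 := by
  rw [crossingSign, Finset.abs_prod]
  exact Finset.prod_eq_one fun z _ => by split_ifs <;> simp

theorem crossingSign_eventuallyEq {F : Finset ℝ} {t₀ : ℝ} (h : t₀ ∉ F) :
    crossingSign F =ᶠ[𝓝 t₀] fun _ => crossingSign F t₀ := by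
  have hside : ∀ᶠ t in 𝓝 t₀, ∀ z ∈ F, (t < z ↔ t₀ < z) := by
    refine (eventually_all_finset F).2 fun z hz => ?_
    rcases (ne_of_mem_of_not_mem hz h).lt_or_gt with hzt | htz
    · filter_upwards [eventually_gt_nhds hzt] with t ht
      exact iff_of_false ht.not_gt hzt.not_gt
    · filter_upwards [eventually_lt_nhds htz] with t ht
      exact iff_of_true ht htz
  filter_upwards [hside] with t ht
  exact Finset.prod_congr rfl fun z hz => by simp only [ht z hz]

theorem eventually_crossingSign_mul_abs_sub {F : Finset ℝ} {t₀ : ℝ} (h : t₀ ∈ F) :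
    ∀ᶠ t in 𝓝 t₀, crossingSign F t * |t - t₀| = crossingSign F t₀ * (t - t₀) := by
  filter_upwards [crossingSign_eventuallyEq (Finset.notMem_erase t₀ F)] with t ht
  simp only [crossingSign] at ht ⊢
  rw [← Finset.mul_prod_erase F _ h, ← Finset.mul_prod_erase F _ h, ht]
  rcases lt_or_ge t t₀ with htt | htt
  · simp [htt, abs_of_neg (sub_neg.2 htt)]
    ring
  · simp [htt.not_gt, abs_of_nonneg (sub_nonneg.2 htt)]

section

variable {E : Type*} [NormedAddCommGroup E] [InnerProductSpace ℝ E]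

theorem HasDerivWithinAt.norm {f : ℝ → E} {f' : E} {s : Set ℝ} {x : ℝ}
    (hf : HasDerivWithinAt f f' s x) (h0 : f x ≠ 0) :
    HasDerivWithinAt (fun t => ‖f t‖) (⟪f x, f'⟫ / ‖f x‖) s x := by
  have hsq := hf.norm_sq.sqrt (by positivity)
  simp only [Real.sqrt_sq (norm_nonneg _)] at hsq
  convert hsq using 1
  field_simp

theorem tendsto_inner_div_norm {α : Type*} {l : Filter α} {x y : α → E} {y₀ : E}
    (hx : Tendsto x l (𝓝 y₀)) (hy : Tendsto y l (𝓝 y₀)) :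
    Tendsto (fun i => ⟪x i, y i⟫ / ‖x i‖) l (𝓝 ‖y₀‖) := by
  rcases eq_or_ne y₀ 0 with rfl | hy₀
  · rw [tendsto_zero_iff_norm_tendsto_zero] at hy
    rw [norm_zero]
    refine squeeze_zero_norm (fun i => ?_) hy
    rw [Real.norm_eq_abs, abs_div, abs_norm]
    exact div_le_of_le_mul₀ (norm_nonneg _) (norm_nonneg _)
      ((abs_real_inner_le_norm _ _).trans_eq (mul_comm _ _))
  · have := (hx.inner hy).div hx.norm (norm_ne_zero_iff.2 hy₀)
    rwa [real_inner_self_eq_norm_sq, sq, mul_div_cancel_right₀ _ (norm_ne_zero_iff.2 hy₀)]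
      at this

noncomputable def signedNorm (F : Finset ℝ) (v : ℝ → E) (t : ℝ) : ℝ :=
  crossingSign F t * ‖v t‖

open Classical in
noncomputable def signedNormDeriv (F : Finset ℝ) (v w : ℝ → E) (t : ℝ) : ℝ :=
  crossingSign F t * if v t = 0 then ‖w t‖ else ⟪v t, w t⟫ / ‖v t‖

variable {F : Finset ℝ} {s : Set ℝ} {v w : ℝ → E} {t₀ : ℝ}

theorem hasDerivWithinAt_signedNorm_of_ne_zero (hF : t₀ ∉ F)
    (hv : HasDerivWithinAt v (w t₀) s t₀) (h0 : v t₀ ≠ 0) :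
    HasDerivWithinAt (signedNorm F v) (signedNormDeriv F v w t₀) s t₀ := by
  have hσ : ∀ᶠ t in 𝓝[s] t₀, crossingSign F t = crossingSign F t₀ :=
    nhdsWithin_le_nhds (crossingSign_eventuallyEq hF)
  rw [signedNormDeriv, if_neg h0]
  exact ((hv.norm h0).const_mul _).congr_of_eventuallyEq
    (hσ.mono fun t ht => by rw [signedNorm, ht]) rfl

theorem hasDerivWithinAt_signedNorm_of_eq_zero (hF : t₀ ∈ F)
    (hv : HasDerivWithinAt v (w t₀) s t₀) (h0 : v t₀ = 0) :
    HasDerivWithinAt (signedNorm F v) (signedNormDeriv F v w t₀) s t₀ := by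
  rw [hasDerivWithinAt_iff_tendsto_slope] at hv ⊢
  rw [signedNormDeriv, if_pos h0]
  refine (hv.norm.const_mul _).congr' ?_
  filter_upwards [nhdsWithin_le_nhds (eventually_crossingSign_mul_abs_sub hF),
    nhdsWithin_mono _ (sdiff_subset_compl _ _) self_mem_nhdsWithin] with t hσ (htt : t ≠ t₀)
  have hsub : t - t₀ ≠ 0 := sub_ne_zero.2 htt
  rw [slope_def_field, slope_def_module, signedNorm, signedNorm, h0, norm_zero, mul_zero,
    sub_zero, sub_zero, norm_smul, norm_inv, Real.norm_eq_abs]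
  field_simp
  linear_combination -‖v t‖ * hσ

theorem continuousWithinAt_signedNormDeriv_of_ne_zero (hF : t₀ ∉ F)
    (hv : ContinuousWithinAt v s t₀) (hw : ContinuousWithinAt w s t₀) (h0 : v t₀ ≠ 0) :
    ContinuousWithinAt (signedNormDeriv F v w) s t₀ := by
  have hlim : ContinuousWithinAt (fun t => crossingSign F t₀ * (⟪v t, w t⟫ / ‖v t‖)) s t₀ :=
    ((hv.inner hw).div hv.norm (norm_ne_zero_iff.2 h0)).const_mul _
  refine hlim.congr_of_eventuallyEq ?_ (by rw [signedNormDeriv, if_neg h0])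
  filter_upwards [nhdsWithin_le_nhds (crossingSign_eventuallyEq hF), hv.eventually_ne h0]
    with t hσ hvt
  rw [signedNormDeriv, if_neg hvt, hσ]

theorem continuousWithinAt_signedNormDeriv_of_eq_zero (hF : ∀ t ∈ s, t ∈ F ↔ v t = 0)
    (ht₀ : t₀ ∈ s) (hv : HasDerivWithinAt v (w t₀) s t₀) (hw : ContinuousWithinAt w s t₀)
    (h0 : v t₀ = 0) : ContinuousWithinAt (signedNormDeriv F v w) s t₀ := by
  have hslope := hasDerivWithinAt_iff_tendsto_slope.1 hv
  have hlim := (tendsto_inner_div_norm hslope (hw.mono sdiff_subset)).const_mul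
    (crossingSign F t₀)
  rw [← continuousWithinAt_sdiff_self, ContinuousWithinAt, signedNormDeriv, if_pos h0]
  refine hlim.congr' ?_
  filter_upwards [nhdsWithin_le_nhds (eventually_crossingSign_mul_abs_sub ((hF t₀ ht₀).2 h0)),
    nhdsWithin_mono _ (sdiff_subset_compl _ _) (F.finite_toSet.eventually_notMem_nhdsNE t₀),
    self_mem_nhdsWithin] with t hσ htF ⟨hts, (htt : t ≠ t₀)⟩
  have hvt : v t ≠ 0 := fun h => htF ((hF t hts).2 h)
  have hsub : t - t₀ ≠ 0 := sub_ne_zero.2 htt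
  have habs : |t - t₀| ≠ 0 := abs_ne_zero.2 hsub
  rw [signedNormDeriv, if_neg hvt, slope_def_module, h0, sub_zero, real_inner_smul_left,
    norm_smul, norm_inv, Real.norm_eq_abs]
  have hσ' : crossingSign F t * (t - t₀) = crossingSign F t₀ * |t - t₀| := by
    refine mul_left_cancel₀ habs ?_
    linear_combination (t - t₀) * hσ - crossingSign F t₀ * abs_mul_abs_self (t - t₀)
  field_simp
  linear_combination -⟪v t, w t⟫ * hσ'

theorem contDiffOn_signedNorm (hs : UniqueDiffOn ℝ s) (hv : ContDiffOn ℝ 1 v s)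
    (hF : ∀ t ∈ s, t ∈ F ↔ v t = 0) : ContDiffOn ℝ 1 (signedNorm F v) s := by
  set w := derivWithin v s
  have hvw : ∀ t ∈ s, HasDerivWithinAt v (w t) s t := fun t ht =>
    ((hv.differentiableOn one_ne_zero) t ht).hasDerivWithinAt
  have hw : ContinuousOn w s := hv.continuousOn_derivWithin hs le_rfl
  have hderiv : ∀ t ∈ s, HasDerivWithinAt (signedNorm F v) (signedNormDeriv F v w t) s t := by
    intro t ht
    by_cases h0 : v t = 0
    · exact hasDerivWithinAt_signedNorm_of_eq_zero ((hF t ht).2 h0) (hvw t ht) h0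
    · exact hasDerivWithinAt_signedNorm_of_ne_zero (mt (hF t ht).1 h0) (hvw t ht) h0
  have hcont : ContinuousOn (signedNormDeriv F v w) s := by
    intro t ht
    by_cases h0 : v t = 0
    · exact continuousWithinAt_signedNormDeriv_of_eq_zero hF ht (hvw t ht) (hw t ht) h0
    · exact continuousWithinAt_signedNormDeriv_of_ne_zero (mt (hF t ht).1 h0)
        (hv.continuousOn t ht) (hw t ht) h0
  rw [contDiffOn_one_iff_derivWithin hs]
  exact ⟨fun t ht => (hderiv t ht).differentiableWithinAt,
    hcont.congr fun t ht => (hderiv t ht).derivWithin (hs t ht)⟩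

end

theorem signed_norm_C1
    (n : ℕ) (a b : ℝ) (v : ℝ → EuclideanSpace ℝ (Fin n))
    (hv : ContDiffOn ℝ 1 v (Icc a b))
    (hfin : {t ∈ Icc a b | v t = 0}.Finite) :
    ∃ μ : ℝ → ℝ, ContDiffOn ℝ 1 μ (Icc a b) ∧
      ∀ t ∈ Icc a b, |μ t| = ‖v t‖ := by
  have hF : ∀ t ∈ Icc a b, t ∈ hfin.toFinset ↔ v t = 0 := fun t ht => by simpa using fun _ => ht
  refine ⟨signedNorm hfin.toFinset v, ?_, fun t _ => by
    rw [signedNorm, abs_mul, abs_crossingSign, abs_norm, one_mul]⟩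
  rcases lt_or_ge a b with hab | hba
  · exact contDiffOn_signedNorm (uniqueDiffOn_Icc hab) hv hF
  · exact fun t ht => contDiffWithinAt_singleton.mono
      fun x hx => (subsingleton_Icc_of_ge hba) hx ht
end

section
/- Under the hypotheses of the C¹ diagonalization theorem, there exists a continuously differentiable function λ : [a,b] → ℝ such that λ(t) is an eigenvalue of A(t) for every t ∈ [a,b]. Specifically, with A(t) = [[f(t), h(t)], [h̄(t), g(t)]] and μ a C¹ function with |μ(t)| = √((f(t)−g(t))² + 4|h(t)|²), the function λ(t) = (f(t)+g(t)+μ(t))/2 is C¹ and is an eigenvalue of A(t) for each t. -/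
open Matrix Set

theorem det_smul_one_sub_hermitian_fin_two (x p q : ℝ) (z : ℂ) :
    det ((x : ℂ) • (1 : Matrix (Fin 2) (Fin 2) ℂ) - !![(p : ℂ), z; star z, (q : ℂ)]) =
      (((x - p) * (x - q) - ‖z‖ ^ 2 : ℝ) : ℂ) := by
  rw [det_fin_two]
  simp [Complex.mul_conj']

theorem det_half_trace_add_smul_one_sub_hermitian_fin_two (p q m : ℝ) (z : ℂ)
    (hm : m ^ 2 = (p - q) ^ 2 + 4 * ‖z‖ ^ 2) :
    det ((((p + q + m) / 2 : ℝ) : ℂ) • (1 : Matrix (Fin 2) (Fin 2) ℂ) -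
      !![(p : ℂ), z; star z, (q : ℂ)]) = 0 := by
  rw [det_smul_one_sub_hermitian_fin_two, Complex.ofReal_eq_zero]
  linear_combination hm / 4

theorem sq_eq_of_abs_eq_sqrt {x y : ℝ} (hy : 0 ≤ y) (h : |x| = √y) : x ^ 2 = y := by
  rw [← sq_abs, h, Real.sq_sqrt hy]

theorem C1_eigenvalue_branch_general
    (a b : ℝ) (f g μ : ℝ → ℝ) (h : ℝ → ℂ)
    (hf : ContDiffOn ℝ 1 f (Icc a b)) (hg : ContDiffOn ℝ 1 g (Icc a b))
    (hμ : ContDiffOn ℝ 1 μ (Icc a b))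
    (hμabs : ∀ t ∈ Icc a b,
      |μ t| = Real.sqrt ((f t - g t) ^ 2 + 4 * ‖h t‖ ^ 2))
    (A : ℝ → Matrix (Fin 2) (Fin 2) ℂ)
    (hA : ∀ t, A t = !![(f t : ℂ), h t; star (h t), (g t : ℂ)]) :
    ContDiffOn ℝ 1 (fun t => (f t + g t + μ t) / 2) (Icc a b) ∧
    ∀ t ∈ Icc a b,
      det ((((f t + g t + μ t) / 2 : ℝ) : ℂ) • (1 : Matrix (Fin 2) (Fin 2) ℂ) - A t) = 0 := by
  refine ⟨((hf.add hg).add hμ).div_const 2, fun t ht => ?_⟩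
  rw [hA]
  exact det_half_trace_add_smul_one_sub_hermitian_fin_two _ _ _ _
    (sq_eq_of_abs_eq_sqrt (by positivity) (hμabs t ht))

theorem C1_eigenvalue_branch
    (a b : ℝ) (hab : a ≤ b) (f g μ : ℝ → ℝ) (h : ℝ → ℂ)
    (hf : ContDiffOn ℝ 1 f (Icc a b)) (hg : ContDiffOn ℝ 1 g (Icc a b))
    (hh : ContDiffOn ℝ 1 h (Icc a b)) (hμ : ContDiffOn ℝ 1 μ (Icc a b))
    (hfin : {t ∈ Icc a b | f t = g t ∧ h t = 0}.Finite)
    (hμabs : ∀ t ∈ Icc a b,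
      |μ t| = Real.sqrt ((f t - g t) ^ 2 + 4 * ‖h t‖ ^ 2))
    (A : ℝ → Matrix (Fin 2) (Fin 2) ℂ)
    (hA : ∀ t, A t = !![(f t : ℂ), h t; star (h t), (g t : ℂ)]) :
    ContDiffOn ℝ 1 (fun t => (f t + g t + μ t) / 2) (Icc a b) ∧
    ∀ t ∈ Icc a b,
      det ((((f t + g t + μ t) / 2 : ℝ) : ℂ) • (1 : Matrix (Fin 2) (Fin 2) ℂ) - A t) = 0 :=
  C1_eigenvalue_branch_general a b f g μ h hf hg hμ hμabs A hA
end

section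
/- Define A : [−1,1] → M₂(ℝ) by A(t) = t·[[1, χ(t)], [χ(t), χ(t)]], where χ is the characteristic function of [0,1]. Then A is continuous and each A(t) is symmetric, but there is no continuous U : [−1,1] → M₂(ℂ) with U(t) unitary and U(t)* A(t) U(t) diagonal for all t. -/
open Matrix Set

theorem no_continuous_diagonalization_example
    (A : ℝ → Matrix (Fin 2) (Fin 2) ℝ)
    (hA : ∀ t, A t = !![t, if 0 ≤ t then t else 0;
                        if 0 ≤ t then t else 0, if 0 ≤ t then t else 0]) :
    ContinuousOn A (Icc (-1) 1) ∧ (∀ t ∈ Icc (-1 : ℝ) 1, (A t).IsSymm) ∧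
    ¬ ∃ U : ℝ → Matrix (Fin 2) (Fin 2) ℂ,
        ContinuousOn U (Icc (-1) 1) ∧
        ∀ t ∈ Icc (-1 : ℝ) 1, (U t)ᴴ * U t = 1 ∧
          ((U t)ᴴ * (A t).map (fun x => (x : ℂ)) * U t).IsDiag := by
  have hg : Continuous (fun t : ℝ => if 0 ≤ t then t else 0) := by
    have : (fun t : ℝ => if 0 ≤ t then t else 0) = fun t => max t 0 := by
      funext t
      rcases le_or_gt 0 t with h | h
      · simp [h, max_eq_left h]
      · simp [not_le.2 h, max_eq_right h.le]
    rw [this]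
    exact continuous_id.max continuous_const
  have hcontA : Continuous A := by
    have hAe : A = fun t => !![t, if 0 ≤ t then t else 0;
                        if 0 ≤ t then t else 0, if 0 ≤ t then t else 0] := funext hA
    rw [hAe]
    refine continuous_matrix fun i j => ?_
    fin_cases i <;> fin_cases j <;> simp <;>
      first | exact continuous_id | exact hg
  refine ⟨hcontA.continuousOn, ?_, ?_⟩
  · intro t _
    rw [Matrix.IsSymm]
    ext i j
    fin_cases i <;> fin_cases j <;> simp [hA t]
  · rintro ⟨U, hUc, hU⟩
    have h0mem : (0 : ℝ) ∈ Icc (-1 : ℝ) 1 := by norm_num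
    have hentry : ∀ i j, ContinuousOn (fun t => U t i j) (Icc (-1 : ℝ) 1) := by
      intro i j
      exact ((continuous_apply j).comp (continuous_apply i)).comp_continuousOn hUc
    -- f vanishes on [-1,0)
    set f : ℝ → ℂ := fun t => star (U t 0 0) * U t 0 1 with hfdef
    set g : ℝ → ℂ :=
      fun t => (star (U t 0 0) + star (U t 1 0)) * (U t 0 1 + U t 1 1) with hgdef
    have hfc : ContinuousOn f (Icc (-1 : ℝ) 1) :=
      (hentry 0 0).star.mul (hentry 0 1)
    have hgc : ContinuousOn g (Icc (-1 : ℝ) 1) :=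
      ((hentry 0 0).star.add (hentry 1 0).star).mul ((hentry 0 1).add (hentry 1 1))
    have hfz : ∀ t ∈ Ico (-1 : ℝ) 0, f t = 0 := by
      intro t ht
      have ht' : t ∈ Icc (-1 : ℝ) 1 := ⟨ht.1, ht.2.le.trans one_pos.le⟩
      have h01 := (hU t ht').2 (show (0 : Fin 2) ≠ 1 by decide)
      have hAneg : A t = !![t, 0; 0, 0] := by
        rw [hA t]; simp [not_le.2 ht.2]
      rw [hAneg] at h01
      simp [Matrix.mul_apply, Fin.sum_univ_two, Matrix.conjTranspose_apply,
        Matrix.map_apply] at h01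
      have htne : (t : ℂ) ≠ 0 := by
        exact_mod_cast ne_of_lt ht.2
      rcases h01 with (h | h) | h
      · show star (U t 0 0) * U t 0 1 = 0
        rw [h, star_zero, zero_mul]
      · exact absurd h (ne_of_lt ht.2)
      · show star (U t 0 0) * U t 0 1 = 0
        rw [h, mul_zero]
    have hgz : ∀ t ∈ Ioc (0 : ℝ) 1, g t = 0 := by
      intro t ht
      have ht' : t ∈ Icc (-1 : ℝ) 1 := ⟨le_trans (by norm_num) ht.1.le, ht.2⟩
      have h01 := (hU t ht').2 (show (0 : Fin 2) ≠ 1 by decide)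
      have hApos : A t = !![t, t; t, t] := by
        rw [hA t]; simp [ht.1.le]
      rw [hApos] at h01
      simp [Matrix.mul_apply, Fin.sum_univ_two, Matrix.conjTranspose_apply,
        Matrix.map_apply] at h01
      have htne : (t : ℂ) ≠ 0 := by
        exact_mod_cast ne_of_gt ht.1
      show (star (U t 0 0) + star (U t 1 0)) * (U t 0 1 + U t 1 1) = 0
      rw [show (star (U t 0 0) : ℂ) = (starRingEnd ℂ) (U t 0 0) from rfl,
        show (star (U t 1 0) : ℂ) = (starRingEnd ℂ) (U t 1 0) from rfl]
      have h' : (t : ℂ) * (((starRingEnd ℂ) (U t 0 0) + (starRingEnd ℂ) (U t 1 0)) *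
          (U t 0 1 + U t 1 1)) = 0 := by
        linear_combination h01
      exact (mul_eq_zero.1 h').resolve_left htne
    -- limits at 0
    have hne1 : (nhdsWithin (0 : ℝ) (Ico (-1 : ℝ) 0)).NeBot := by
      rw [← mem_closure_iff_nhdsWithin_neBot, closure_Ico (by norm_num : (-1 : ℝ) ≠ 0)]
      exact ⟨by norm_num, le_refl 0⟩
    have hne2 : (nhdsWithin (0 : ℝ) (Ioc (0 : ℝ) 1)).NeBot := by
      rw [← mem_closure_iff_nhdsWithin_neBot, closure_Ioc (by norm_num : (0 : ℝ) ≠ 1)]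
      exact ⟨le_refl 0, by norm_num⟩
    have hf0 : f 0 = 0 := by
      have hcw : ContinuousWithinAt f (Ico (-1 : ℝ) 0) 0 :=
        (hfc 0 h0mem).mono (fun x hx => ⟨hx.1, hx.2.le.trans one_pos.le⟩)
      have h2 : Filter.Tendsto f (nhdsWithin (0 : ℝ) (Ico (-1 : ℝ) 0)) (nhds 0) := by
        apply Filter.Tendsto.congr' _ tendsto_const_nhds
        filter_upwards [self_mem_nhdsWithin] with x hx
        exact (hfz x hx).symm
      exact tendsto_nhds_unique hcw h2
    have hg0 : g 0 = 0 := by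
      have hcw : ContinuousWithinAt g (Ioc (0 : ℝ) 1) 0 :=
        (hgc 0 h0mem).mono (fun x hx => ⟨le_trans (by norm_num) hx.1.le, hx.2⟩)
      have h2 : Filter.Tendsto g (nhdsWithin (0 : ℝ) (Ioc (0 : ℝ) 1)) (nhds 0) := by
        apply Filter.Tendsto.congr' _ tendsto_const_nhds
        filter_upwards [self_mem_nhdsWithin] with x hx
        exact (hgz x hx).symm
      exact tendsto_nhds_unique hcw h2
    -- unitarity at 0
    have hu := (hU 0 h0mem).1
    set a := U 0 0 0 with ha
    set b := U 0 0 1 with hb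
    set c := U 0 1 0 with hc
    set d := U 0 1 1 with hd
    have e00 : star a * a + star c * c = 1 := by
      have := congrFun (congrFun hu 0) 0
      simpa [Matrix.mul_apply, Fin.sum_univ_two, Matrix.conjTranspose_apply,
        Matrix.one_apply] using this
    have e01 : star a * b + star c * d = 0 := by
      have := congrFun (congrFun hu 0) 1
      simpa [Matrix.mul_apply, Fin.sum_univ_two, Matrix.conjTranspose_apply,
        Matrix.one_apply] using this
    have e11 : star b * b + star d * d = 1 := by
      have := congrFun (congrFun hu 1) 1
      simpa [Matrix.mul_apply, Fin.sum_univ_two, Matrix.conjTranspose_apply,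
        Matrix.one_apply] using this
    have hf0' : star a * b = 0 := hf0
    have hg0' : (star a + star c) * (b + d) = 0 := hg0
    rcases mul_eq_zero.1 hf0' with hsa | hbz
    · -- star a = 0, so a = 0
      have haz : a = 0 := by
        have := congrArg star hsa
        simpa using this
      have hcne : c ≠ 0 := by
        intro hcz
        rw [haz, hcz] at e00
        simp at e00
      have hdz : d = 0 := by
        rw [haz] at e01
        simp at e01
        exact e01.resolve_left hcne
      rw [haz, hdz] at hg0'
      simp at hg0'
      rcases hg0' with h | h
      · exact hcne (by simpa using congrArg star h)
      · rw [h, hdz] at e11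
        simp at e11
    · -- b = 0
      have hdne : d ≠ 0 := by
        intro hdz
        rw [hbz, hdz] at e11
        simp at e11
      have hcz : c = 0 := by
        rw [hbz] at e01
        simp at e01
        exact e01.resolve_right hdne
      have hane : a ≠ 0 := by
        intro haz
        rw [haz, hcz] at e00
        simp at e00
      rw [hbz, hcz] at hg0'
      simp at hg0'
      rcases hg0' with h | h
      · exact hane (by simpa using congrArg star h)
      · exact hdne h
end
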